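/- arXiv:2309.11360 — 3 statements merged into one kernel-verified Lean document; each statement's English description precedes it below -/
import Mathlib

section
/- Let f be analytic on the unit disc 𝔻. Then the function u(z) := Re f^{1/2}(z), where f^{1/2} is the pointwise principal square-root of f, is continuous and subharmonic on 𝔻. -/
open MeasureTheory Real Set

noncomputable section

/-- The backward shift operator: `Bf(z) = (f(z) - f(0))/z` for `z ≠ 0`, `Bf(0) = f'(0)`. -/
def bwdShift (f : ℂ → ℂ) : ℂ → ℂ :=
  fun z => if z = 0 then deriv f 0 else (f z - f 0) / z

/-- The point `r·e^{iθ}`. -/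
def circlePoint (r θ : ℝ) : ℂ := (r : ℂ) * Complex.exp ((θ : ℂ) * Complex.I)

/-- The integral mean `(1/2π)∫₀^{2π} |f(re^{iθ})| dθ`. -/
def hardyMean1 (f : ℂ → ℂ) (r : ℝ) : ℝ :=
  (2 * π)⁻¹ * ∫ θ in (0:ℝ)..(2 * π), ‖f (circlePoint r θ)‖

/-- Membership in the Hardy space `H¹` of the unit disc. -/
def MemHardy1 (f : ℂ → ℂ) : Prop :=
  DifferentiableOn ℂ f (Metric.ball (0:ℂ) 1) ∧ BddAbove (hardyMean1 f '' Set.Ioo 0 1)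

/-- The `H¹` norm: `sup_{0<r<1} (1/2π)∫₀^{2π} |f(re^{iθ})| dθ`. -/
def hardyNorm1 (f : ℂ → ℂ) : ℝ := sSup (hardyMean1 f '' Set.Ioo 0 1)

/-- `g` gives the radial boundary values of `f` for a.e. `θ ∈ (0, 2π]`. -/
def IsRadialLimit (f : ℂ → ℂ) (g : ℝ → ℂ) : Prop :=
  ∀ᵐ θ ∂(volume.restrict (Set.Ioc (0:ℝ) (2 * π))),
    Filter.Tendsto (fun r : ℝ => f (circlePoint r θ)) (nhdsWithin 1 (Set.Iio 1)) (nhds (g θ))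

/-- `I` is an inner function: bounded analytic on the disc with unimodular radial
boundary values almost everywhere. -/
def IsInnerFn (I : ℂ → ℂ) : Prop :=
  DifferentiableOn ℂ I (Metric.ball (0:ℂ) 1) ∧
  (∀ z ∈ Metric.ball (0:ℂ) 1, ‖I z‖ ≤ 1) ∧
  ∀ᵐ θ ∂(volume.restrict (Set.Ioc (0:ℝ) (2 * π))),
    ∃ w : ℂ, ‖w‖ = 1 ∧
      Filter.Tendsto (fun r : ℝ => I (circlePoint r θ)) (nhdsWithin 1 (Set.Iio 1)) (nhds w)

/-- The pointwise principal square root: `0` at `0`, and `√|w|·e^{i·Arg(w)/2}` otherwise. -/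
def psqrt (w : ℂ) : ℂ :=
  if w = 0 then 0
  else (Real.sqrt ‖w‖ : ℂ) * Complex.exp (((w.arg / 2 : ℝ) : ℂ) * Complex.I)

end

/-!
`Re √w = √((|w| + Re w)/2)` is a continuous function of `w`, which gives continuity. At a zero
of `f` the sub-mean value inequality holds because `Re f^{1/2} ≥ 0` vanishes there. Near a
point where `f ≠ 0`, `f` has a holomorphic square root `g`, and `Re f^{1/2} = |Re g|` is the
absolute value of a harmonic function, hence bounded by its circle averages.
-/

open Complex Metric Filter Topology

lemma psqrt_eq_cpow (w : ℂ) : psqrt w = w ^ (2⁻¹ : ℂ) := by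
  by_cases h : w = 0
  · simp [h, psqrt]
  · rw [psqrt, if_neg h, cpow_def_of_ne_zero h]
    have hlog : log w * 2⁻¹ = ((Real.log ‖w‖ / 2 : ℝ) : ℂ) + ((w.arg / 2 : ℝ) : ℂ) * I := by
      rw [Complex.log]; push_cast; ring
    rw [hlog, Complex.exp_add, ← ofReal_exp, ← Real.log_sqrt (norm_nonneg w),
      Real.exp_log (Real.sqrt_pos.2 (norm_pos_iff.2 h))]

lemma psqrt_sq (w : ℂ) : psqrt w ^ 2 = w := by
  rw [psqrt_eq_cpow, cpow_ofNat_inv_pow]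

lemma re_psqrt (w : ℂ) : (psqrt w).re = √((‖w‖ + w.re) / 2) := by
  rw [psqrt_eq_cpow, cpow_inv_two_re]

lemma re_psqrt_nonneg (w : ℂ) : 0 ≤ (psqrt w).re :=
  re_psqrt w ▸ Real.sqrt_nonneg _

lemma re_psqrt_of_sq_eq {g w : ℂ} (h : g ^ 2 = w) : (psqrt w).re = |g.re| := by
  have hnorm : ‖w‖ = g.re ^ 2 + g.im ^ 2 := by
    rw [← h, norm_pow, Complex.sq_norm, normSq_apply]; ring
  have hre : w.re = g.re ^ 2 - g.im ^ 2 := by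
    rw [← h, sq, mul_re]; ring
  rw [re_psqrt, hnorm, hre, ← Real.sqrt_sq_eq_abs]
  ring_nf

lemma continuous_re_psqrt : Continuous fun w => (psqrt w).re := by
  simp only [re_psqrt]
  fun_prop

/-- The square root is `f(z)^{1/2} · exp (log (f / f(z)) / 2)`, holomorphic where `f / f(z)` stays
in the slit plane around `1`. -/
lemma exists_eventually_sq_eq_of_ne_zero {f : ℂ → ℂ} {z : ℂ}
    (hf : ∀ᶠ ζ in 𝓝 z, DifferentiableAt ℂ f ζ) (hz : f z ≠ 0) :
    ∃ g : ℂ → ℂ, ∀ᶠ ζ in 𝓝 z, DifferentiableAt ℂ g ζ ∧ g ζ ^ 2 = f ζ := by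
  have hslit : ∀ᶠ ζ in 𝓝 z, f ζ / f z ∈ slitPlane := by
    refine ((hf.self_of_nhds.continuousAt.div_const (f z)).eventually_mem ?_)
    rw [div_self hz]
    exact isOpen_slitPlane.mem_nhds one_mem_slitPlane
  refine ⟨fun ζ => psqrt (f z) * exp (log (f ζ / f z) / 2), ?_⟩
  filter_upwards [hf, hslit] with ζ hdiff hmem
  refine ⟨(differentiableAt_const _).mul
    (((hdiff.div_const _).clog hmem).div_const 2).cexp, ?_⟩
  rw [mul_pow, psqrt_sq, ← Complex.exp_nat_mul, Nat.cast_ofNat, mul_div_cancel₀ _ two_ne_zero,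
    exp_log (slitPlane_ne_zero hmem), mul_div_cancel₀ _ hz]

lemma abs_re_le_circleAverage_abs_re {g : ℂ → ℂ} {c : ℂ} {R : ℝ}
    (hg : DiffContOnCl ℂ g (ball c |R|)) :
    |(g c).re| ≤ circleAverage (fun ζ => |(g ζ).re|) c R := by
  have hint : CircleIntegrable g c R :=
    (hg.continuousOn_ball.mono sphere_subset_closedBall).circleIntegrable'
  have hmean : circleAverage (fun ζ => (g ζ).re) c R = (g c).re := by
    rw [← hg.circleAverage]
    exact reCLM.circleAverage_comp_comm hint
  rw [← hmean]
  exact abs_circleAverage_le_circleAverage_abs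

lemma eventually_re_psqrt_le_circleAverage {f : ℂ → ℂ} {z : ℂ}
    (hf : ∀ᶠ ζ in 𝓝 z, DifferentiableAt ℂ f ζ) :
    ∀ᶠ r in 𝓝[>] 0, (psqrt (f z)).re ≤ circleAverage (fun ζ => (psqrt (f ζ)).re) z r := by
  by_cases hz : f z = 0
  · refine Eventually.of_forall fun r => ?_
    rw [hz, psqrt, if_pos rfl, zero_re]
    exact circleAverage_nonneg_of_nonneg fun ζ _ => re_psqrt_nonneg _
  obtain ⟨g, hg⟩ := exists_eventually_sq_eq_of_ne_zero hf hz
  obtain ⟨ρ, hρ, hgρ⟩ := eventually_nhds_iff_ball.1 hg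
  filter_upwards [Ioo_mem_nhdsGT hρ] with r hr
  have hball : closedBall z |r| ⊆ ball z ρ :=
    closedBall_subset_ball (by rw [abs_of_pos hr.1]; exact hr.2)
  have hgr : DiffContOnCl ℂ g (ball z |r|) :=
    DifferentiableOn.diffContOnCl_ball
      (fun ζ hζ => (hgρ ζ hζ).1.differentiableWithinAt) hball
  rw [re_psqrt_of_sq_eq (hgρ z (mem_ball_self hρ)).2,
    circleAverage_congr_sphere fun ζ hζ =>
      re_psqrt_of_sq_eq (hgρ ζ (hball (sphere_subset_closedBall hζ))).2]
  exact abs_re_le_circleAverage_abs_re hgr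

/-- If `f` is analytic on the unit disc, then `u(z) = Re f^{1/2}(z)` is continuous and
subharmonic on the disc: it satisfies the sub-mean value inequality on all sufficiently
small circles about each point. -/
theorem re_psqrt_continuousOn_and_subharmonic (f : ℂ → ℂ)
    (hf : DifferentiableOn ℂ f (Metric.ball (0:ℂ) 1)) :
    ContinuousOn (fun z => (psqrt (f z)).re) (Metric.ball (0:ℂ) 1) ∧
    ∀ z ∈ Metric.ball (0:ℂ) 1, ∃ ρ > 0, Metric.ball z ρ ⊆ Metric.ball (0:ℂ) 1 ∧
      ∀ r ∈ Set.Ioo (0:ℝ) ρ,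
        (psqrt (f z)).re ≤
          (2 * π)⁻¹ * ∫ θ in (0:ℝ)..(2 * π), (psqrt (f (z + circlePoint r θ))).re := by
  refine ⟨continuous_re_psqrt.comp_continuousOn hf.continuousOn, fun z hz => ?_⟩
  obtain ⟨ρ, hρ, hmean⟩ := mem_nhdsGT_iff_exists_Ioo_subset.1 <|
    eventually_re_psqrt_le_circleAverage <|
      hf.eventually_differentiableAt (isOpen_ball.mem_nhds hz)
  obtain ⟨ε, hε, hεball⟩ := isOpen_iff.1 isOpen_ball z hz
  -- `circleAverage u z r` is definitionally the mean in the statement, since `circleMap z r θ`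
  -- unfolds to `z + circlePoint r θ`.
  exact ⟨min ρ ε, lt_min hρ hε, (ball_subset_ball (min_le_right _ _)).trans hεball,
    fun r hr => hmean ⟨hr.1, hr.2.trans_le (min_le_left _ _)⟩⟩
end

section
/- If w₁ and w₂ are complex numbers with Re w₁ ≥ 0 and Re w₂ ≥ 0, then |Re w₁ − Re w₂| ≤ √|w₁² − w₂²|. -/
open MeasureTheory Real Set

theorem Complex.abs_re_sub_re_le_norm_add {a b : ℂ} (ha : 0 ≤ a.re) (hb : 0 ≤ b.re) :
    |a.re - b.re| ≤ ‖a + b‖ :=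
  calc |a.re - b.re| ≤ a.re + b.re := abs_le.2 ⟨by linarith, by linarith⟩
    _ = (a + b).re := (Complex.add_re a b).symm
    _ ≤ ‖a + b‖ := Complex.re_le_norm _

theorem Complex.abs_re_sub_re_le_norm_sub (a b : ℂ) : |a.re - b.re| ≤ ‖a - b‖ := by
  simpa using Complex.abs_re_le_norm (a - b)

/-- If `Re w₁ ≥ 0` and `Re w₂ ≥ 0`, then `|Re w₁ - Re w₂| ≤ √|w₁² - w₂²|`. -/
theorem abs_re_sub_re_le_sqrt_abs_sq_sub_sq (w₁ w₂ : ℂ)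
    (h₁ : 0 ≤ w₁.re) (h₂ : 0 ≤ w₂.re) :
    |w₁.re - w₂.re| ≤ Real.sqrt (‖w₁ ^ 2 - w₂ ^ 2‖) := by
  apply Real.abs_le_sqrt
  calc (w₁.re - w₂.re) ^ 2 = |w₁.re - w₂.re| * |w₁.re - w₂.re| := by rw [← sq_abs, sq]
    _ ≤ ‖w₁ + w₂‖ * ‖w₁ - w₂‖ :=
      mul_le_mul (Complex.abs_re_sub_re_le_norm_add h₁ h₂)
        (Complex.abs_re_sub_re_le_norm_sub w₁ w₂) (abs_nonneg _) (norm_nonneg _)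
    _ = ‖w₁ ^ 2 - w₂ ^ 2‖ := by rw [← norm_mul, ← sq_sub_sq]
end

section
/- Let I be an inner function on the unit disc with I(0) = 0, let 0 < λ < 1 and c > 0, and set f(z) := c·((1 + λI(z))/(1 − λI(z)))². Then f belongs to the Hardy space H¹, f(0) = c, and ‖f‖₁ = c·(1 + 3λ²)/(1 − λ²); equivalently, f(0)/‖f‖₁ = (1 − λ²)/(1 + 3λ²). -/
open MeasureTheory Real Set

/-!
Write `w = (1 + λI)/(1 - λI)` and `A = 2(1 + λ²)/(1 - λ²)`. From
`|1 + z|² + |1 - z|² = 2(1 + |z|²)` and `Re w = (1 - |λI|²)/|1 - λI|²` one gets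
`|w|² + 1 ≤ A · Re w` on the disc, with equality wherever `|I| = 1`. Hence `|f| ≤ Re F` for the
bounded holomorphic function `F = c(A w - 1)`, and by the mean value property every integral mean
of `|f|` is at most `Re F(0) = c(A - 1) = c(1 + 3λ²)/(1 - λ²)`. Since `|I| = 1` at almost every
boundary point, `Re F - |f| → 0` radially almost everywhere, and dominated convergence shows that
the integral means of `|f|` tend to `Re F(0)`.
-/

open Filter Topology Metric

noncomputable def cayley (z : ℂ) : ℂ := (1 + z) / (1 - z)

section Cayley
variable {z : ℂ} {ρ : ℝ}

lemma ne_one_of_norm_lt_one (hz : ‖z‖ < 1) : z ≠ 1 := by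
  rintro rfl
  simp at hz

lemma sq_norm_cayley_add_one (hz : z ≠ 1) :
    ‖cayley z‖ ^ 2 + 1 = 2 * (1 + ‖z‖ ^ 2) / ‖1 - z‖ ^ 2 := by
  have hD : ‖1 - z‖ ^ 2 ≠ 0 := pow_ne_zero 2 (norm_ne_zero_iff.2 (sub_ne_zero.2 hz.symm))
  rw [cayley, norm_div, div_pow, div_add_one hD]
  simp only [Complex.sq_norm, Complex.normSq_apply, Complex.add_re, Complex.add_im,
    Complex.sub_re, Complex.sub_im, Complex.one_re, Complex.one_im]
  ring

lemma re_cayley (z : ℂ) : (cayley z).re = (1 - ‖z‖ ^ 2) / ‖1 - z‖ ^ 2 := by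
  rw [cayley, Complex.div_re]
  simp only [Complex.sq_norm, Complex.normSq_apply, Complex.add_re, Complex.add_im,
    Complex.sub_re, Complex.sub_im, Complex.one_re, Complex.one_im]
  ring

lemma sq_norm_cayley_add_one_le (hz : ‖z‖ ≤ ρ) (hρ : ρ < 1) :
    ‖cayley z‖ ^ 2 + 1 ≤ 2 * (1 + ρ ^ 2) / (1 - ρ ^ 2) * (cayley z).re := by
  have hz1 := ne_one_of_norm_lt_one (hz.trans_lt hρ)
  have hD : 0 < ‖1 - z‖ ^ 2 := by
    have := norm_pos_iff.2 (sub_ne_zero.2 hz1.symm); positivity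
  have hρ2 : ‖z‖ ^ 2 ≤ ρ ^ 2 := pow_le_pow_left₀ (norm_nonneg z) hz 2
  have hρ1 : 0 < 1 - ρ ^ 2 := by nlinarith [norm_nonneg z]
  rw [sq_norm_cayley_add_one hz1, re_cayley, mul_div_assoc', div_le_div_iff_of_pos_right hD,
    div_mul_eq_mul_div, le_div_iff₀ hρ1]
  nlinarith

lemma sq_norm_cayley_add_one_eq (hz : ‖z‖ = ρ) (hρ : ρ < 1) :
    ‖cayley z‖ ^ 2 + 1 = 2 * (1 + ρ ^ 2) / (1 - ρ ^ 2) * (cayley z).re := by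
  have hz1 := ne_one_of_norm_lt_one (hz.trans_lt hρ)
  have hρ1 : 1 - ρ ^ 2 ≠ 0 := by nlinarith [norm_nonneg z]
  rw [sq_norm_cayley_add_one hz1, re_cayley, hz]
  field_simp

lemma norm_cayley_le (hz : ‖z‖ ≤ ρ) (hρ : ρ < 1) : ‖cayley z‖ ≤ (1 + ρ) / (1 - ρ) := by
  rw [cayley, norm_div]
  gcongr
  · linarith [norm_nonneg z]
  · exact (norm_add_le _ _).trans (by simpa using hz)
  · exact le_trans (by rw [norm_one]; linarith) (norm_sub_norm_le 1 z)

lemma differentiableAt_cayley (hz : z ≠ 1) : DifferentiableAt ℂ cayley z :=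
  (differentiableAt_const _).add differentiableAt_id |>.div
    ((differentiableAt_const _).sub differentiableAt_id) (sub_ne_zero.2 hz.symm)

lemma DifferentiableOn.cayley {g : ℂ → ℂ} {s : Set ℂ} (hg : DifferentiableOn ℂ g s)
    (hg1 : ∀ z ∈ s, g z ≠ 1) : DifferentiableOn ℂ (fun z => cayley (g z)) s := fun z hz =>
  DifferentiableAt.comp_differentiableWithinAt (g := _root_.cayley) z
    (differentiableAt_cayley (hg1 z hz)) (hg z hz)

end Cayley

section HarmonicMajorant
variable {f F : ℂ → ℂ} {r M : ℝ}

lemma hardyMean1_eq_circleAverage (f : ℂ → ℂ) (r : ℝ) :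
    hardyMean1 f r = circleAverage (fun z => ‖f z‖) 0 r := by
  simp only [hardyMean1, circleAverage_def, circlePoint, circleMap_zero, smul_eq_mul]

lemma closedBall_abs_subset_ball_one (hr : r ∈ Ioo 0 1) : closedBall (0 : ℂ) |r| ⊆ ball 0 1 :=
  closedBall_subset_ball (by rw [abs_of_pos hr.1]; exact hr.2)

lemma ContinuousOn.circleIntegrable_of_mem_Ioo {E : Type*} [NormedAddCommGroup E]
    {g : ℂ → E} (hg : ContinuousOn g (ball 0 1)) (hr : r ∈ Ioo 0 1) : CircleIntegrable g 0 r :=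
  (hg.mono (sphere_subset_closedBall.trans (closedBall_abs_subset_ball_one hr))).circleIntegrable'

lemma circleAverage_re_of_differentiableOn (hF : DifferentiableOn ℂ F (ball 0 1))
    (hr : r ∈ Ioo 0 1) : circleAverage (fun z => (F z).re) 0 r = (F 0).re := by
  rw [← (hF.diffContOnCl_ball (closedBall_abs_subset_ball_one hr)).circleAverage]
  exact Complex.reCLM.circleAverage_comp_comm (hF.continuousOn.circleIntegrable_of_mem_Ioo hr)

variable (hf : ContinuousOn f (ball 0 1)) (hF : DifferentiableOn ℂ F (ball 0 1))
  (hmaj : ∀ z ∈ ball 0 1, ‖f z‖ ≤ (F z).re)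
include hf hF

lemma re_sub_hardyMean1_eq_circleAverage (hr : r ∈ Ioo 0 1) :
    (F 0).re - hardyMean1 f r = circleAverage (fun z => (F z).re - ‖f z‖) 0 r := by
  rw [circleAverage_fun_sub, circleAverage_re_of_differentiableOn hF hr,
    hardyMean1_eq_circleAverage]
  · exact (Complex.continuous_re.comp_continuousOn hF.continuousOn).circleIntegrable_of_mem_Ioo hr
  · exact hf.norm.circleIntegrable_of_mem_Ioo hr

include hmaj

lemma hardyMean1_le_re_of_norm_le_re (hr : r ∈ Ioo 0 1) : hardyMean1 f r ≤ (F 0).re := by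
  rw [← sub_nonneg, re_sub_hardyMean1_eq_circleAverage hf hF hr]
  exact circleAverage_nonneg_of_nonneg fun z hz =>
    sub_nonneg.2 (hmaj z (closedBall_abs_subset_ball_one hr (sphere_subset_closedBall hz)))

lemma tendsto_hardyMean1_of_norm_le_re (hM : ∀ z ∈ ball 0 1, (F z).re ≤ M)
    (hlim : ∀ᵐ θ ∂(volume.restrict (Ioc 0 (2 * π))), Tendsto
      (fun r => (F (circlePoint r θ)).re - ‖f (circlePoint r θ)‖) (𝓝[<] 1) (𝓝 0)) :
    Tendsto (hardyMean1 f) (𝓝[<] 1) (𝓝 (F 0).re) := by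
  set D : ℂ → ℝ := fun z => (F z).re - ‖f z‖
  have hD : ContinuousOn D (ball 0 1) :=
    (Complex.continuous_re.comp_continuousOn hF.continuousOn).sub hf.norm
  have hIoo : ∀ᶠ r in 𝓝[<] (1 : ℝ), r ∈ Ioo 0 1 := Ioo_mem_nhdsLT one_pos
  have hmem : ∀ᶠ r in 𝓝[<] (1 : ℝ), ∀ θ, circleMap 0 r θ ∈ ball 0 1 := hIoo.mono fun r hr θ =>
    closedBall_abs_subset_ball_one hr (sphere_subset_closedBall (circleMap_mem_sphere' 0 r θ))
  have hint : Tendsto (fun r => ∫ θ in 0..2 * π, D (circleMap 0 r θ)) (𝓝[<] 1)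
      (𝓝 (∫ _ in 0..2 * π, (0 : ℝ))) := by
    refine intervalIntegral.tendsto_integral_filter_of_dominated_convergence (fun _ => M)
      (hmem.mono fun r hr => ?_) (hmem.mono fun r hr => ?_) intervalIntegrable_const ?_
    · exact (hD.comp_continuous (continuous_circleMap 0 r) hr).aestronglyMeasurable
    · refine ae_of_all _ fun θ _ => abs_le.2 ⟨?_, ?_⟩ <;>
        linarith [hmaj _ (hr θ), hM _ (hr θ), norm_nonneg (f (circleMap 0 r θ))]
    · rw [uIoc_of_le two_pi_pos.le, ← ae_restrict_iff' measurableSet_Ioc]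
      simpa only [circlePoint, ← circleMap_zero] using hlim
  have hdefect : Tendsto (fun r => (F 0).re - hardyMean1 f r) (𝓝[<] 1) (𝓝 0) := by
    refine ((hint.const_mul (2 * π)⁻¹).congr' (hIoo.mono fun r hr => ?_)).trans_eq (by simp)
    rw [re_sub_hardyMean1_eq_circleAverage hf hF hr, circleAverage_def, smul_eq_mul]
  simpa using (tendsto_const_nhds (x := (F 0).re)).sub hdefect

end HarmonicMajorant

lemma hardyNorm1_eq_of_le_of_tendsto {f : ℂ → ℂ} {L : ℝ}
    (hle : ∀ r ∈ Ioo 0 1, hardyMean1 f r ≤ L)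
    (hlim : Tendsto (hardyMean1 f) (𝓝[<] 1) (𝓝 L)) : hardyNorm1 f = L :=
  (isLUB_of_mem_closure (forall_mem_image.2 hle) (mem_closure_of_tendsto hlim
    (eventually_of_mem (Ioo_mem_nhdsLT one_pos) fun _ hr => mem_image_of_mem _ hr))).csSup_eq
    ((nonempty_Ioo.2 one_pos).image _)

theorem memHardy1_and_hardyNorm1_eq_of_norm_le_re {f F : ℂ → ℂ} {M : ℝ}
    (hf : DifferentiableOn ℂ f (ball 0 1)) (hF : DifferentiableOn ℂ F (ball 0 1))
    (hmaj : ∀ z ∈ ball 0 1, ‖f z‖ ≤ (F z).re) (hM : ∀ z ∈ ball 0 1, (F z).re ≤ M)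
    (hlim : ∀ᵐ θ ∂(volume.restrict (Ioc 0 (2 * π))), Tendsto
      (fun r => (F (circlePoint r θ)).re - ‖f (circlePoint r θ)‖) (𝓝[<] 1) (𝓝 0)) :
    MemHardy1 f ∧ hardyNorm1 f = (F 0).re := by
  have hle := fun r => hardyMean1_le_re_of_norm_le_re (r := r) hf.continuousOn hF hmaj
  exact ⟨⟨hf, _, forall_mem_image.2 hle⟩, hardyNorm1_eq_of_le_of_tendsto hle
    (tendsto_hardyMean1_of_norm_le_re hf.continuousOn hF hmaj hM hlim)⟩

theorem memHardy1_and_hardyNorm1_mul_cayley_sq {g : ℂ → ℂ} {ρ c : ℝ}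
    (hg : DifferentiableOn ℂ g (ball 0 1)) (hgρ : ∀ z ∈ ball 0 1, ‖g z‖ ≤ ρ) (hρ : ρ < 1)
    (hc : 0 ≤ c) (hbdry : ∀ᵐ θ ∂(volume.restrict (Ioc 0 (2 * π))),
      ∃ w, ‖w‖ = ρ ∧ Tendsto (fun r => g (circlePoint r θ)) (𝓝[<] 1) (𝓝 w)) :
    MemHardy1 (fun z => c * cayley (g z) ^ 2) ∧ hardyNorm1 (fun z => c * cayley (g z) ^ 2) =
      c * (2 * (1 + ρ ^ 2) / (1 - ρ ^ 2) * (cayley (g 0)).re - 1) := by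
  set A : ℝ := 2 * (1 + ρ ^ 2) / (1 - ρ ^ 2)
  have hρ0 : 0 ≤ ρ := (norm_nonneg _).trans (hgρ 0 (mem_ball_self one_pos))
  have hA : 0 ≤ A := div_nonneg (by positivity) (by nlinarith)
  have hnorm : ∀ u, ‖(c : ℂ) * cayley u ^ 2‖ = c * ‖cayley u‖ ^ 2 := fun u => by
    simp [abs_of_nonneg hc]
  have hre : ∀ u, ((c : ℂ) * (A * cayley u - 1)).re = c * (A * (cayley u).re - 1) := fun u => by
    simp
  have hcay := hg.cayley fun z hz => ne_one_of_norm_lt_one ((hgρ z hz).trans_lt hρ)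
  refine hre (g 0) ▸ memHardy1_and_hardyNorm1_eq_of_norm_le_re
    (F := fun z => c * (A * cayley (g z) - 1)) (M := c * A * ((1 + ρ) / (1 - ρ)))
    ((hcay.pow 2).const_mul _)
    (((hcay.const_mul _).sub_const 1).const_mul _) (fun z hz => ?_) (fun z hz => ?_) ?_
  · rw [hnorm, hre]
    nlinarith [sq_norm_cayley_add_one_le (hgρ z hz) hρ]
  · have := mul_le_mul_of_nonneg_left
      ((Complex.re_le_norm _).trans (norm_cayley_le (hgρ z hz) hρ)) (mul_nonneg hc hA)
    rw [hre]
    nlinarith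
  · filter_upwards [hbdry] with θ ⟨w, hw, hlim⟩
    have hcont : ContinuousAt cayley w :=
      (differentiableAt_cayley (ne_one_of_norm_lt_one (hw.trans_lt hρ))).continuousAt
    have hφ : ContinuousAt (fun u => c * (A * (cayley u).re - 1) - c * ‖cayley u‖ ^ 2) w := by
      fun_prop
    have hφ0 : c * (A * (cayley w).re - 1) - c * ‖cayley w‖ ^ 2 = 0 := by
      rw [← sq_norm_cayley_add_one_eq hw hρ]
      ring
    simpa only [hre, hnorm, hφ0, Function.comp_def] using hφ.tendsto.comp hlim

/-- For an inner function `I` with `I(0) = 0`, `0 < λ < 1` and `c > 0`, the function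
`f = c((1 + λI)/(1 - λI))²` is in `H¹` with `f(0) = c` and `‖f‖₁ = c(1 + 3λ²)/(1 - λ²)`;
equivalently `f(0)/‖f‖₁ = (1 - λ²)/(1 + 3λ²)`. -/
theorem hardyNorm1_of_inner_extremal (I : ℂ → ℂ) (hI : IsInnerFn I) (hI0 : I 0 = 0)
    (lam c : ℝ) (hlam : lam ∈ Set.Ioo (0:ℝ) 1) (hc : 0 < c) (f : ℂ → ℂ)
    (hf : ∀ z, f z = (c : ℂ) * ((1 + (lam : ℂ) * I z) / (1 - (lam : ℂ) * I z)) ^ 2) :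
    MemHardy1 f ∧ f 0 = (c : ℂ) ∧
      hardyNorm1 f = c * (1 + 3 * lam ^ 2) / (1 - lam ^ 2) ∧
      (f 0).re / hardyNorm1 f = (1 - lam ^ 2) / (1 + 3 * lam ^ 2) := by
  obtain ⟨hl0, hl1⟩ := hlam
  obtain ⟨hId, hIbd, hIrad⟩ := hI
  have hlI : ∀ z ∈ ball 0 1, ‖(lam : ℂ) * I z‖ ≤ lam := fun z hz => by
    simpa [abs_of_pos hl0] using mul_le_of_le_one_right hl0.le (hIbd z hz)
  have hbdry : ∀ᵐ θ ∂(volume.restrict (Ioc 0 (2 * π))), ∃ w, ‖w‖ = lam ∧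
      Tendsto (fun r => (lam : ℂ) * I (circlePoint r θ)) (𝓝[<] 1) (𝓝 w) := by
    filter_upwards [hIrad] with θ ⟨w, hw, hlim⟩
    exact ⟨lam * w, by simp [hw, abs_of_pos hl0], hlim.const_mul _⟩
  obtain ⟨hmem, hnorm⟩ := (funext hf : f = _) ▸
    memHardy1_and_hardyNorm1_mul_cayley_sq (hId.const_mul _) hlI hl1 hc.le hbdry
  have hf0 : f 0 = c := by simp [hf, hI0]
  have hlam2 : 0 < 1 - lam ^ 2 := by nlinarith
  have hnorm' : hardyNorm1 f = c * (1 + 3 * lam ^ 2) / (1 - lam ^ 2) := by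
    rw [hnorm, hI0]
    simp only [mul_zero, cayley, add_zero, sub_zero, div_one, Complex.one_re]
    field_simp
    ring
  refine ⟨hmem, hf0, hnorm', ?_⟩
  rw [hf0, hnorm', Complex.ofReal_re]
  field_simp
end
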